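/- Let K and D' ≤ D be divisor classes in a lattice with K·K = 1, D numerically equivalent to K, D = D' + W with D', W effective, and D'·K = 1 (hence W·K = 0). If every effective decomposition of D into two nonzero effective parts D₁ + D₂ satisfies D₁·D₂ ≥ 2 (2-connectedness), and W ≠ 0, then (D')² ≤ −1. -/
import Mathlib

/-- Step 4) of the proof of Theorem 3.2, abstracted to a lattice with a
symmetric bilinear form `B` and a notion of effective classes.  If `K² = 1`,
`D = K` numerically, `D = D' + W` with `D', W` effective, `D'·K = 1`, `D` is
2-connected, and `W ≠ 0`, then `(D')² ≤ −1`. -/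
theorem two_connected_subdivisor_square
    {L : Type*} [AddCommGroup L] (B : L → L → ℤ)
    (hsymm : ∀ x y, B x y = B y x)
    (hadd : ∀ x y z, B (x + y) z = B x z + B y z)
    (Eff : L → Prop)
    (K D D' W : L)
    (hKK : B K K = 1)
    (hDnum : D = K)
    (hdecomp : D = D' + W)
    (hD'eff : Eff D') (hWeff : Eff W)
    (hD'K : B D' K = 1)
    (h2conn : ∀ D₁ D₂ : L, Eff D₁ → Eff D₂ → D₁ ≠ 0 → D₂ ≠ 0 →
      D = D₁ + D₂ → B D₁ D₂ ≥ 2)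
    (hW : W ≠ 0) (hD' : D' ≠ 0) :
    B D' D' ≤ -1 := by
  have h2 : B D' W ≥ 2 := h2conn D' W hD'eff hWeff hD' hW hdecomp
  have hK : K = D' + W := hDnum ▸ hdecomp
  have : B K D' = B D' D' + B W D' := by rw [hK, hadd]
  have hKD' : B K D' = 1 := by rw [hsymm]; exact hD'K
  have hWD' : B W D' = B D' W := hsymm W D'
  linarith
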